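/- arXiv:2006.15363 — 3 statements merged into one kernel-verified Lean document; each statement's English description precedes it below -/
import Mathlib

section
/- For fixed positive reals a and b, the pointwise α-divergence integrand satisfies the limit: (α a + (1−α) b − a^α b^{1−α})/(α(1−α)) → a·log(a/b) + b − a as α → 1. -/
open Real Filter Topology

/-! The numerator `g α = α a + (1 - α) b - a ^ α b ^ (1 - α)` vanishes at `α = 1`, so the integrand
`g α / (α (1 - α)) = -(g α / (α - 1)) / α` tends to `-g'(1) = a log (a / b) + b - a`. -/

theorem tendsto_div_sub_of_hasDerivAt {𝕜 : Type*} [NontriviallyNormedField 𝕜] {f : 𝕜 → 𝕜}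
    {f' x : 𝕜} (hf : HasDerivAt f f' x) (hfx : f x = 0) :
    Tendsto (fun y => f y / (y - x)) (𝓝[≠] x) (𝓝 f') :=
  hf.tendsto_slope.congr fun y => by rw [slope_def_field, hfx, sub_zero]

theorem hasDerivAt_rpow_mul_rpow_one_sub {a b : ℝ} (ha : 0 < a) (hb : 0 < b) (t : ℝ) :
    HasDerivAt (fun α : ℝ => a ^ α * b ^ (1 - α)) (a ^ t * b ^ (1 - t) * log (a / b)) t := by
  have hpow_a := (hasDerivAt_id' t).const_rpow ha
  have hpow_b := ((hasDerivAt_id' t).const_sub 1).const_rpow hb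
  refine (hpow_a.fun_mul hpow_b).congr_deriv ?_
  rw [log_div ha.ne' hb.ne']
  ring

/-- The pointwise α-divergence integrand tends to the KL integrand as α → 1. -/
theorem alpha_integrand_tendsto_one (a b : ℝ) (ha : 0 < a) (hb : 0 < b) :
    Tendsto (fun α : ℝ => (α * a + (1 - α) * b - a ^ α * b ^ (1 - α)) / (α * (1 - α)))
      (𝓝[≠] 1) (𝓝 (a * Real.log (a / b) + b - a)) := by
  set g : ℝ → ℝ := fun α => α * a + (1 - α) * b - a ^ α * b ^ (1 - α)
  have hlin : HasDerivAt (fun α : ℝ => α * a + (1 - α) * b) (a - b) 1 :=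
    (((hasDerivAt_id' 1).mul_const a).fun_add
      (((hasDerivAt_id' 1).const_sub 1).mul_const b)).congr_deriv (by ring)
  have hg : HasDerivAt g (a - b - a * log (a / b)) 1 :=
    (hlin.fun_sub (hasDerivAt_rpow_mul_rpow_one_sub ha hb 1)).congr_deriv (by simp)
  have hg_one : g 1 = 0 := by simp [g]
  have hlim : Tendsto (fun α => -(g α / (α - 1)) / α) (𝓝[≠] 1)
      (𝓝 (-(a - b - a * log (a / b)) / 1)) :=
    (tendsto_div_sub_of_hasDerivAt hg hg_one).neg.div
      (tendsto_id.mono_left nhdsWithin_le_nhds) one_ne_zero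
  convert hlim using 2 with α
  · rw [← neg_div, div_div, neg_div, ← div_neg, neg_mul_eq_neg_mul, neg_sub, mul_comm (1 - α) α]
  · ring
end

section
/- For all real κ, |log((e^{μ+κ}+1)/(e^μ + e^κ))| ≤ |κ| for every real μ; more precisely, H(μ;κ) is Lipschitz in μ with constant tanh(|κ|/2) ≤ 1. -/
open Real

private lemma tanh_eq' (x : ℝ) :
    Real.tanh (x / 2) = (Real.exp x - 1) / (Real.exp x + 1) := by
  have h : Real.exp (-(x / 2)) = 1 / Real.exp (x / 2) := by
    rw [Real.exp_neg]; ring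
  have hx : Real.exp (x / 2) * Real.exp (x / 2) = Real.exp x := by
    rw [← Real.exp_add]; ring_nf
  have hp := Real.exp_pos (x / 2)
  have hp2 : (0:ℝ) < Real.exp (x / 2) * Real.exp (x / 2) + 1 := by positivity
  rw [Real.tanh_eq_sinh_div_cosh, Real.sinh_eq, Real.cosh_eq, h, ← hx]
  field_simp

private lemma deriv_bound (κ μ : ℝ) :
    |Real.exp (μ + κ) / (Real.exp (μ + κ) + 1) - Real.exp μ / (Real.exp μ + Real.exp κ)|
      ≤ Real.tanh (|κ| / 2) := by
  rw [tanh_eq' |κ|]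
  have hμ := Real.exp_pos μ
  have hκ := Real.exp_pos κ
  have hμκ : Real.exp (μ + κ) = Real.exp μ * Real.exp κ := Real.exp_add μ κ
  have h1 : (0:ℝ) < Real.exp μ * Real.exp κ + 1 := by positivity
  have h2 : (0:ℝ) < Real.exp μ + Real.exp κ := by positivity
  have key : Real.exp (μ + κ) / (Real.exp (μ + κ) + 1) - Real.exp μ / (Real.exp μ + Real.exp κ)
      = Real.exp μ * (Real.exp κ * Real.exp κ - 1)
        / ((Real.exp μ * Real.exp κ + 1) * (Real.exp μ + Real.exp κ)) := by
    rw [hμκ]; field_simp; ring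
  rw [key, abs_div,
    abs_of_pos (show (0:ℝ) < (Real.exp μ * Real.exp κ + 1) * (Real.exp μ + Real.exp κ)
      by positivity),
    div_le_div_iff₀ (by positivity) (by positivity)]
  rcases abs_cases κ with ⟨h3, h4⟩ | ⟨h3, h4⟩
  · rw [h3]
    have hy : 1 ≤ Real.exp κ := Real.one_le_exp h4
    have hy2 : 1 ≤ Real.exp κ * Real.exp κ := by nlinarith
    rw [abs_of_nonneg (show (0:ℝ) ≤ Real.exp μ * (Real.exp κ * Real.exp κ - 1) by nlinarith)]
    nlinarith [mul_nonneg (mul_nonneg (sub_nonneg.2 hy) hκ.le) (sq_nonneg (Real.exp μ - 1))]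
  · rw [h3]
    have hy : Real.exp κ ≤ 1 := Real.exp_le_one_iff.mpr (le_of_lt h4)
    have hy2 : Real.exp κ * Real.exp κ ≤ 1 := by nlinarith
    rw [abs_of_nonpos (show Real.exp μ * (Real.exp κ * Real.exp κ - 1) ≤ (0:ℝ) by nlinarith)]
    have hw : Real.exp (-κ) * Real.exp κ = 1 := by rw [← Real.exp_add]; simp
    have hdiff : (Real.exp (-κ) - 1) * ((Real.exp μ * Real.exp κ + 1) * (Real.exp μ + Real.exp κ))
        - -(Real.exp μ * (Real.exp κ * Real.exp κ - 1)) * (Real.exp (-κ) + 1)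
        = (1 - Real.exp κ) * (Real.exp μ - 1) ^ 2 := by
      linear_combination (Real.exp μ ^ 2 + 2 * Real.exp μ * Real.exp κ + 1) * hw
    nlinarith [mul_nonneg (sub_nonneg.2 hy) (sq_nonneg (Real.exp μ - 1))]

/-- `H(·;κ)` is Lipschitz in `μ` with constant `tanh(|κ|/2) ≤ 1`, and `|H(μ;κ)| ≤ |κ|`. -/
theorem H_lipschitz_and_bounded (κ : ℝ) :
    (∀ μ₁ μ₂ : ℝ,
        |Real.log ((Real.exp (μ₁ + κ) + 1) / (Real.exp μ₁ + Real.exp κ)) -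
            Real.log ((Real.exp (μ₂ + κ) + 1) / (Real.exp μ₂ + Real.exp κ))|
          ≤ Real.tanh (|κ| / 2) * |μ₁ - μ₂|) ∧
      Real.tanh (|κ| / 2) ≤ 1 ∧
      ∀ μ : ℝ, |Real.log ((Real.exp (μ + κ) + 1) / (Real.exp μ + Real.exp κ))| ≤ |κ| := by
  have hκe := Real.exp_pos κ
  refine ⟨?_, ?_, ?_⟩
  · -- Lipschitz via MVT
    set f : ℝ → ℝ := fun μ => Real.log ((Real.exp (μ + κ) + 1) / (Real.exp μ + Real.exp κ))
    set f' : ℝ → ℝ := fun μ =>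
      Real.exp (μ + κ) / (Real.exp (μ + κ) + 1) - Real.exp μ / (Real.exp μ + Real.exp κ)
    have hderiv : ∀ μ : ℝ, HasDerivAt f (f' μ) μ := by
      intro μ
      have h1 : (0:ℝ) < Real.exp (μ + κ) + 1 := by positivity
      have h2 : (0:ℝ) < Real.exp μ + Real.exp κ := by positivity
      have d1 : HasDerivAt (fun x : ℝ => Real.exp (x + κ) + 1) (Real.exp (μ + κ)) μ := by
        simpa using (((hasDerivAt_id μ).add_const κ).exp).add_const 1
      have d2 : HasDerivAt (fun x : ℝ => Real.exp x + Real.exp κ) (Real.exp μ) μ :=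
        (Real.hasDerivAt_exp μ).add_const _
      have hd := (d1.log (ne_of_gt h1)).sub (d2.log (ne_of_gt h2))
      have heq : ∀ x : ℝ, f x = Real.log (Real.exp (x + κ) + 1) - Real.log (Real.exp x + Real.exp κ) := by
        intro x
        simp only [f]
        rw [Real.log_div (by positivity) (by positivity)]
      exact (Filter.EventuallyEq.hasDerivAt_iff (Filter.Eventually.of_forall heq)).mpr hd
    intro μ₁ μ₂
    have := Convex.norm_image_sub_le_of_norm_hasDerivWithin_le
      (f := f) (f' := f') (C := Real.tanh (|κ| / 2)) (s := Set.univ)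
      (fun x _ => (hderiv x).hasDerivWithinAt)
      (fun x _ => by rw [Real.norm_eq_abs]; exact deriv_bound κ x)
      convex_univ (Set.mem_univ μ₂) (Set.mem_univ μ₁)
    simpa [Real.norm_eq_abs] using this
  · -- tanh ≤ 1
    rw [Real.tanh_eq_sinh_div_cosh]
    exact div_le_one_of_le₀ (le_of_lt (Real.sinh_lt_cosh _)) (le_of_lt (Real.cosh_pos _))
  · -- bound
    intro μ
    have hμe := Real.exp_pos μ
    have h1 : (0:ℝ) < Real.exp (μ + κ) + 1 := by positivity
    have h2 : (0:ℝ) < Real.exp μ + Real.exp κ := by positivity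
    have hμκ : Real.exp (μ + κ) = Real.exp μ * Real.exp κ := Real.exp_add μ κ
    rw [abs_le]
    constructor
    · rw [Real.le_log_iff_exp_le (by positivity), le_div_iff₀ h2]
      rcases abs_cases κ with ⟨h3, h4⟩ | ⟨h3, h4⟩
      · rw [h3, Real.exp_neg, inv_mul_le_iff₀ hκe, hμκ]
        have hy2 : 1 ≤ Real.exp κ * Real.exp κ := by nlinarith [Real.one_le_exp h4]
        nlinarith [mul_nonneg hμe.le (sub_nonneg.2 hy2)]
      · rw [h3, neg_neg, hμκ]
        have hy : Real.exp κ ≤ 1 := Real.exp_le_one_iff.mpr (le_of_lt h4)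
        nlinarith [mul_pos hμe hκe]
    · rw [Real.log_le_iff_le_exp (by positivity), div_le_iff₀ h2]
      rcases abs_cases κ with ⟨h3, h4⟩ | ⟨h3, h4⟩
      · rw [h3, hμκ]
        nlinarith [Real.one_le_exp h4, mul_pos hμe hκe]
      · rw [h3, Real.exp_neg, hμκ]
        have hy : Real.exp κ ≤ 1 := Real.exp_le_one_iff.mpr (le_of_lt h4)
        have hinv : 1 ≤ (Real.exp κ)⁻¹ := (one_le_inv₀ hκe).2 hy
        have hc : (Real.exp κ)⁻¹ * Real.exp κ = 1 := inv_mul_cancel₀ (ne_of_gt hκe)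
        nlinarith [mul_le_mul_of_nonneg_left (hy.trans hinv) hμe.le, hc]
end

section
/- Define f(z) = log((exp(2κ + Δ(z)) + 1)/(exp(Δ(z)) + exp(2κ))) where Δ : ℝ^d → ℝ is an affine function Δ(z) = a₀ + ∑_i a_i z_i. Then f is differentiable and |∂f/∂z_i(z)| ≤ |a_i| · tanh(|κ|) for all z. -/
open Real

lemma abs_tanh_eq (κ : ℝ) : |Real.tanh κ| = Real.tanh |κ| := by
  have hnn : ∀ x : ℝ, 0 ≤ x → 0 ≤ Real.tanh x := by
    intro x hx
    rw [Real.tanh_eq_sinh_div_cosh]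
    exact div_nonneg (Real.sinh_nonneg_iff.2 hx) (Real.cosh_pos x).le
  rcases le_total 0 κ with h | h
  · rw [abs_of_nonneg h, abs_of_nonneg (hnn κ h)]
  · have h2 : Real.tanh κ ≤ 0 := by
      have := hnn (-κ) (by linarith)
      rw [Real.tanh_neg] at this; linarith
    rw [abs_of_nonpos h, Real.tanh_neg, abs_of_nonpos h2]

lemma alphaBP_deriv_bound (κ μ : ℝ) :
    |Real.exp (2 * κ + μ) / (Real.exp (2 * κ + μ) + 1)
      - Real.exp μ / (Real.exp μ + Real.exp (2 * κ))| ≤ Real.tanh |κ| := by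
  have ht : (0:ℝ) < Real.exp (2 * κ) := Real.exp_pos _
  have hx : (0:ℝ) < Real.exp μ := Real.exp_pos _
  set t := Real.exp (2 * κ) with htdef
  set x := Real.exp μ with hxdef
  have hexp : Real.exp (2 * κ + μ) = t * x := by rw [Real.exp_add]
  have htanh : Real.tanh κ = (t - 1) / (t + 1) := by
    rw [Real.tanh_eq_sinh_div_cosh, Real.sinh_eq, Real.cosh_eq, htdef,
      show (2:ℝ) * κ = κ + κ by ring, Real.exp_add, Real.exp_neg]
    have h1 : (0:ℝ) < Real.exp κ := Real.exp_pos κ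
    rw [div_eq_div_iff (by positivity) (by positivity)]
    field_simp
  rw [← abs_tanh_eq, htanh, abs_div, abs_of_pos (by linarith : (0:ℝ) < t + 1)]
  have h1 : (0:ℝ) < t * x + 1 := by positivity
  have h2 : (0:ℝ) < x + t := by linarith
  have hdiff : t * x / (t * x + 1) - x / (x + t)
      = x * (t ^ 2 - 1) / ((t * x + 1) * (x + t)) := by
    field_simp
    ring
  rw [hexp, hdiff, abs_div, abs_of_pos (by positivity : (0:ℝ) < (t * x + 1) * (x + t)),
    abs_mul, abs_of_pos hx,
    show t ^ 2 - 1 = (t - 1) * (t + 1) by ring, abs_mul,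
    abs_of_pos (by linarith : (0:ℝ) < t + 1)]
  rw [div_le_div_iff₀ (by positivity) (by linarith)]
  nlinarith [abs_nonneg (t - 1), sq_nonneg (x - 1),
    mul_nonneg (abs_nonneg (t - 1)) (mul_nonneg ht.le (sq_nonneg (x - 1)))]

/-- The α-BP local update `f(z) = log((e^{2κ+Δ(z)}+1)/(e^{Δ(z)}+e^{2κ}))` with affine
`Δ(z) = a₀ + ∑ i, a i * z i` is differentiable with `|∂f/∂z_i| ≤ |a i| * tanh |κ|`. -/
theorem alphaBP_local_grad_bound {d : ℕ} (κ a₀ : ℝ) (a : Fin d → ℝ)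
    (Δ : (Fin d → ℝ) → ℝ) (hΔ : ∀ z, Δ z = a₀ + ∑ i, a i * z i)
    (f : (Fin d → ℝ) → ℝ)
    (hf : ∀ z, f z =
      Real.log ((Real.exp (2 * κ + Δ z) + 1) / (Real.exp (Δ z) + Real.exp (2 * κ)))) :
    Differentiable ℝ f ∧ ∀ z i, |fderiv ℝ f z (Pi.single i 1)| ≤ |a i| * Real.tanh |κ| := by
  -- the outer scalar function
  set g : ℝ → ℝ := fun μ =>
    Real.log (Real.exp (2 * κ + μ) + 1) - Real.log (Real.exp μ + Real.exp (2 * κ)) with hg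
  have hfg : f = fun z => g (Δ z) := by
    funext z
    rw [hf z, hg]
    rw [Real.log_div (by positivity) (by positivity)]
  have hg' : ∀ μ : ℝ, HasDerivAt g
      (Real.exp (2 * κ + μ) / (Real.exp (2 * κ + μ) + 1)
        - Real.exp μ / (Real.exp μ + Real.exp (2 * κ))) μ := by
    intro μ
    have h1 : HasDerivAt (fun μ : ℝ => 2 * κ + μ) 1 μ := by
      simpa using (hasDerivAt_id μ).const_add (2 * κ)
    have h2 : HasDerivAt (fun μ : ℝ => Real.exp (2 * κ + μ) + 1)
        (Real.exp (2 * κ + μ)) μ := by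
      simpa using (h1.exp.add_const 1)
    have h3 : HasDerivAt (fun μ : ℝ => Real.exp μ + Real.exp (2 * κ))
        (Real.exp μ) μ := (Real.hasDerivAt_exp μ).add_const _
    exact (h2.log (by positivity)).sub (h3.log (by positivity))
  -- the linear part
  set L : (Fin d → ℝ) →L[ℝ] ℝ :=
    ∑ i : Fin d, a i • ContinuousLinearMap.proj i with hL
  have hLapp : ∀ z : Fin d → ℝ, L z = ∑ i, a i * z i := by
    intro z
    simp [hL, ContinuousLinearMap.sum_apply, smul_eq_mul]
  have hΔ' : ∀ z, HasFDerivAt Δ L z := by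
    intro z
    have : HasFDerivAt (fun z : Fin d → ℝ => a₀ + L z) L z :=
      (L.hasFDerivAt).const_add a₀
    convert this using 1
    funext w
    rw [hΔ w, hLapp w]
  have hF : ∀ z, HasFDerivAt f
      ((Real.exp (2 * κ + Δ z) / (Real.exp (2 * κ + Δ z) + 1)
        - Real.exp (Δ z) / (Real.exp (Δ z) + Real.exp (2 * κ))) • L) z := by
    intro z
    rw [hfg]
    exact (hg' (Δ z)).comp_hasFDerivAt z (hΔ' z)
  constructor
  · exact fun z => (hF z).differentiableAt
  · intro z i
    rw [(hF z).fderiv]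
    have hLsingle : L (Pi.single i 1) = a i := by
      rw [hLapp]
      simp [Pi.single_apply]
    rw [ContinuousLinearMap.smul_apply, hLsingle, smul_eq_mul, abs_mul, mul_comm]
    exact mul_le_mul_of_nonneg_left (alphaBP_deriv_bound κ (Δ z)) (abs_nonneg _)
end
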